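/- For every integer h ≥ 2, the diameter of MC(3^h) satisfies diam(MC(3^h)) = diam(MC(3^{h−1})) + 1. -/

import Mathlib

/-- The circulant graph `Cay(Z_n, S)`: vertices are `ZMod n`, and distinct
vertices `x, y` are adjacent iff `x - y ≡ s` or `y - x ≡ s (mod n)` for some `s ∈ S`. -/
def circulantGraph (n : ℕ) (S : Set ℕ) : SimpleGraph (ZMod n) where
  Adj x y := x ≠ y ∧ ∃ s ∈ S, (x - y = (s : ZMod n) ∨ y - x = (s : ZMod n))
  symm := by
    constructor
    rintro x y ⟨hne, s, hs, h⟩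
    exact ⟨hne.symm, s, hs, h.symm⟩
  loopless := by
    constructor
    rintro x ⟨hne, -⟩
    exact hne rfl

/-- The multiplicative circulant graph `MC(m^h) = Cay(Z_{m^h}, {m^0, m^1, …, m^{h-1}})`. -/
def MCGraph (m h : ℕ) : SimpleGraph (ZMod (m ^ h)) :=
  circulantGraph (m ^ h) {s | ∃ i < h, s = m ^ i}

open Finset SimpleGraph

lemma MC_sum_shift (h : ℕ) (f : ℕ → ℤ) :
    ∑ i ∈ range (h+1), f i * 3^i = f 0 + 3 * ∑ i ∈ range h, f (i+1) * 3^i := by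
  rw [Finset.sum_range_succ', Finset.mul_sum, add_comm]
  congr 1
  · simp
  · exact Finset.sum_congr rfl fun i _ => by ring

lemma MC_key_lower : ∀ (h : ℕ) (a : ℕ → ℤ) (t : ℤ),
    (3:ℤ)^h ∣ (t + ∑ i ∈ range h, a i * 3^i - ∑ i ∈ range h, 3^i) →
    (h:ℤ) ≤ |t| + ∑ i ∈ range h, |a i| := by
  intro h
  induction h with
  | zero => intro a t _; simp [abs_nonneg]
  | succ h ih =>
    intro a t hd
    have hB : ∑ i ∈ range (h+1), (3:ℤ)^i = 1 + 3 * ∑ i ∈ range h, (3:ℤ)^i := by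
      have := MC_sum_shift h (fun _ => 1)
      simpa using this
    rw [MC_sum_shift h a, hB] at hd
    have h3 : (3:ℤ) ∣ t + a 0 - 1 := by
      have h1 : (3:ℤ) ∣ (3:ℤ)^(h+1) := dvd_pow_self 3 (Nat.succ_ne_zero h)
      have h2 := dvd_trans h1 hd
      omega
    obtain ⟨s, hs⟩ : ∃ s, t + a 0 - 1 = 3 * s := h3
    have hd' : (3:ℤ)^h ∣ (s + ∑ i ∈ range h, a (i+1) * 3^i - ∑ i ∈ range h, 3^i) := by
      have h31 : (3:ℤ)^(h+1) = 3 * 3^h := by ring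
      rw [h31] at hd
      have heq : t + (a 0 + 3 * ∑ i ∈ range h, a (i+1) * 3^i) - (1 + 3 * ∑ i ∈ range h, (3:ℤ)^i)
          = 3 * (s + ∑ i ∈ range h, a (i+1) * 3^i - ∑ i ∈ range h, (3:ℤ)^i) := by omega
      rw [heq] at hd
      exact (mul_dvd_mul_iff_left (by norm_num : (3:ℤ) ≠ 0)).mp hd
    have IH : (h:ℤ) ≤ |s| + ∑ i ∈ range h, |a (i+1)| := ih _ s hd'
    have habs : 1 + |s| ≤ |t| + |a 0| := by
      have h1 : |t + a 0| ≤ |t| + |a 0| := abs_add_le _ _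
      have h2 : t + a 0 = 1 + 3 * s := by omega
      rcases abs_cases s with ⟨e1, e2⟩ | ⟨e1, e2⟩ <;>
        rcases abs_cases (t + a 0) with ⟨f1, f2⟩ | ⟨f1, f2⟩ <;> omega
    rw [Finset.sum_range_succ' (fun i => |a i|)]
    push_cast
    omega

lemma MC_key_upper : ∀ (h : ℕ) (x : ℤ), ∃ a : ℕ → ℤ, (∀ i, |a i| ≤ 1) ∧
    (3:ℤ)^h ∣ (∑ i ∈ range h, a i * 3^i) - x := by
  intro h
  induction h with
  | zero => intro x; exact ⟨0, by simp, by simp⟩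
  | succ h ih =>
    intro x
    have hr : ∃ r : ℤ, |r| ≤ 1 ∧ (3:ℤ) ∣ x - r := by
      refine ⟨if x % 3 = 2 then -1 else x % 3, ?_, ?_⟩
      · have h1 := Int.emod_lt_of_pos x (by norm_num : (0:ℤ) < 3)
        have h2 := Int.emod_nonneg x (by norm_num : (3:ℤ) ≠ 0)
        split <;> simp [abs_le] <;> omega
      · have h2 : x % 3 = x - 3 * (x / 3) := by omega
        split <;> omega
    obtain ⟨r, hr1, hr2⟩ := hr
    obtain ⟨y, hy⟩ : ∃ y, x - r = 3 * y := hr2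
    obtain ⟨a, ha1, ha2⟩ := ih y
    refine ⟨fun i => match i with | 0 => r | (n+1) => a n,
      fun i => by cases i <;> simp [ha1, hr1], ?_⟩
    rw [MC_sum_shift]
    show (3:ℤ)^(h+1) ∣ r + 3 * (∑ i ∈ range h, a i * 3^i) - x
    have heq : r + 3 * (∑ i ∈ range h, a i * 3^i) - x
        = 3 * ((∑ i ∈ range h, a i * 3^i) - y) := by omega
    rw [heq, pow_succ, mul_comm ((3:ℤ)^h) 3]
    exact mul_dvd_mul_left 3 ha2

lemma circ_adj_add (n : ℕ) (S : Set ℕ) (u s : ZMod n)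
    (h : (circulantGraph n S).Adj 0 s) : (circulantGraph n S).Adj u (u + s) := by
  obtain ⟨hne, t, ht, hc⟩ := h
  refine ⟨fun heq => hne ?_, t, ht, ?_⟩
  · have : u + 0 = u + s := by rw [add_zero]; exact heq
    exact add_left_cancel this
  · rcases hc with hc | hc
    · left; rw [← hc]; ring
    · right; rw [← hc]; ring

lemma exists_walk_of_list (n : ℕ) (S : Set ℕ) (l : List (ZMod n))
    (hl : ∀ s ∈ l, (circulantGraph n S).Adj 0 s) (u : ZMod n) :
    ∃ w : (circulantGraph n S).Walk u (u + l.sum), w.length = l.length := by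
  induction l generalizing u with
  | nil => exact ⟨Walk.nil.copy rfl (by simp), by rw [Walk.length_copy]; rfl⟩
  | cons s l ih =>
    obtain ⟨w, hw⟩ := ih (fun x hx => hl x (List.mem_cons_of_mem _ hx)) (u + s)
    refine ⟨((Walk.cons (circ_adj_add n S u s (hl s List.mem_cons_self)) w).copy rfl
      (by rw [List.sum_cons, add_assoc])), by rw [Walk.length_copy, Walk.length_cons, hw, List.length_cons]⟩

lemma MC3_edist_le (h : ℕ) (u v : ZMod (3^h)) : (MCGraph 3 h).edist u v ≤ h := by
  haveI : NeZero (3^h) := ⟨pow_ne_zero h (by norm_num)⟩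
  set x : ℤ := ((v - u).val : ℤ) with hxdef
  have hx : ((x : ℤ) : ZMod (3^h)) = v - u := by
    rw [hxdef]; push_cast; simp [ZMod.natCast_val, ZMod.cast_id]
  obtain ⟨a, ha1, ha2⟩ := MC_key_upper h x
  have hcast : ((∑ i ∈ range h, a i * 3^i : ℤ) : ZMod (3^h)) = v - u := by
    have hdvd : ((3^h : ℕ) : ℤ) ∣ (∑ i ∈ range h, a i * 3^i) - x := by
      push_cast; exact ha2
    have h0 := (ZMod.intCast_zmod_eq_zero_iff_dvd _ _).mpr hdvd
    push_cast at h0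
    rw [← hx]
    push_cast
    linear_combination h0
  set F := (Finset.range h).filter (fun i => a i ≠ 0) with hF
  set l := F.toList.map (fun i => ((a i * 3^i : ℤ) : ZMod (3^h))) with hldef
  have hsum : l.sum = v - u := by
    rw [hldef, Finset.sum_map_toList]
    rw [hF, Finset.sum_filter_of_ne (fun i _ hne => by
      intro hai; apply hne; simp [hai])]
    rw [← hcast]; push_cast; ring_nf
  have hlen : l.length ≤ h := by
    rw [hldef, List.length_map, Finset.length_toList]
    calc F.card ≤ (Finset.range h).card := Finset.card_filter_le _ _
    _ = h := Finset.card_range h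
  have hadj : ∀ s ∈ l, (MCGraph 3 h).Adj 0 s := by
    intro s hs
    rw [hldef] at hs
    obtain ⟨i, hiF, rfl⟩ := List.mem_map.mp hs
    rw [Finset.mem_toList, hF, Finset.mem_filter, Finset.mem_range] at hiF
    obtain ⟨hih, hai⟩ := hiF
    have hcases : a i = 1 ∨ a i = -1 := by
      have := abs_le.mp (ha1 i); omega
    have hne0 : ((a i * 3^i : ℤ) : ZMod (3^h)) ≠ 0 := by
      intro h0
      have hdvd := (ZMod.intCast_zmod_eq_zero_iff_dvd _ _).mp h0
      push_cast at hdvd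
      have hdvd3 : (3:ℤ)^h ∣ (3:ℤ)^i := by
        rcases hcases with hc | hc <;> rw [hc] at hdvd
        · simpa using hdvd
        · rw [show (-1 : ℤ) * 3^i = -(3^i) by ring] at hdvd
          exact (dvd_neg.mp hdvd)
      have hle := Int.le_of_dvd (by positivity) hdvd3
      have hlt : (3:ℤ)^i < (3:ℤ)^h := by
        exact_mod_cast pow_lt_pow_right₀ (by norm_num : (1:ℤ) < 3) hih
      omega
    refine ⟨fun heq => hne0 heq.symm, 3^i, ⟨i, hih, rfl⟩, ?_⟩
    rcases hcases with hc | hc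
    · right; rw [hc]; push_cast; ring
    · left; rw [hc]; push_cast; ring
  obtain ⟨w, hw⟩ := exists_walk_of_list _ _ l hadj u
  have hv : u + l.sum = v := by rw [hsum]; ring
  calc (MCGraph 3 h).edist u v ≤ ((w.copy rfl hv).length : ℕ∞) :=
        SimpleGraph.Walk.edist_le _
  _ ≤ (h : ℕ∞) := by rw [SimpleGraph.Walk.length_copy, hw]; exact_mod_cast hlen

lemma MC3_walk_digits (h : ℕ) {u v : ZMod (3^h)} (w : (MCGraph 3 h).Walk u v) :
    ∃ a : ℕ → ℤ, (∑ i ∈ range h, |a i|) ≤ w.length ∧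
      ((∑ i ∈ range h, a i * 3^i : ℤ) : ZMod (3^h)) = v - u := by
  induction w with
  | nil => exact ⟨0, by simp, by simp⟩
  | @cons u x v hadj w ih =>
    simp only [Walk.length_cons]
    obtain ⟨a, ha1, ha2⟩ := ih
    obtain ⟨hne, t, ⟨i, hih, rfl⟩, hc⟩ := hadj
    have hstep : ∃ ε : ℤ, (ε = 1 ∨ ε = -1) ∧
        x - u = ((ε * 3^i : ℤ) : ZMod (3^h)) := by
      rcases hc with hc | hc
      · refine ⟨-1, Or.inr rfl, ?_⟩
        have : x - u = -(u - x) := by ring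
        rw [this, hc]; push_cast; ring
      · refine ⟨1, Or.inl rfl, ?_⟩
        rw [hc]; push_cast; ring
    obtain ⟨ε, hε, hxu⟩ := hstep
    refine ⟨Function.update a i (a i + ε), ?_, ?_⟩
    · have m : i ∈ range h := Finset.mem_range.mpr hih
      have e1 : ∑ j ∈ range h, |Function.update a i (a i + ε) j|
          = |a i + ε| + ∑ j ∈ (range h).erase i, |a j| := by
        rw [← Finset.add_sum_erase _ _ m]
        congr 1
        · simp
        · exact Finset.sum_congr rfl fun j hj => by
            rw [Function.update_of_ne (Finset.ne_of_mem_erase hj)]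
      have e2 : ∑ j ∈ range h, |a j| = |a i| + ∑ j ∈ (range h).erase i, |a j| :=
        (Finset.add_sum_erase _ _ m).symm
      rw [e1]
      rw [e2] at ha1
      have hb : |a i + ε| ≤ |a i| + 1 := by
        calc |a i + ε| ≤ |a i| + |ε| := abs_add_le _ _
        _ ≤ |a i| + 1 := by rcases hε with rfl|rfl <;> simp
      push_cast
      push_cast at ha1
      omega
    · have m : i ∈ range h := Finset.mem_range.mpr hih
      have e1 : ∑ j ∈ range h, Function.update a i (a i + ε) j * 3^j
          = (a i + ε) * 3^i + ∑ j ∈ (range h).erase i, a j * 3^j := by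
        rw [← Finset.add_sum_erase _ _ m]
        congr 1
        · simp
        · exact Finset.sum_congr rfl fun j hj => by
            rw [Function.update_of_ne (Finset.ne_of_mem_erase hj)]
      have e2 : ∑ j ∈ range h, a j * 3^j
          = a i * 3^i + ∑ j ∈ (range h).erase i, a j * 3^j :=
        (Finset.add_sum_erase _ _ m).symm
      rw [e1]
      have hvu : v - u = (v - x) + (x - u) := by ring
      rw [hvu, ← ha2, hxu, e2]
      push_cast
      ring

lemma MC3_ediam (h : ℕ) : (MCGraph 3 h).ediam = h := by
  apply le_antisymm
  · exact ediam_le_of_edist_le fun u v => MC3_edist_le h u v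
  · set v : ZMod (3^h) := ((∑ i ∈ range h, (3:ℤ)^i : ℤ) : ZMod (3^h)) with hv
    have hlow : ∀ w : (MCGraph 3 h).Walk 0 v, h ≤ w.length := by
      intro w
      obtain ⟨a, ha1, ha2⟩ := MC3_walk_digits h w
      have hz : ((∑ i ∈ range h, a i * 3^i : ℤ) : ZMod (3^h))
          = ((∑ i ∈ range h, (3:ℤ)^i : ℤ) : ZMod (3^h)) := by
        rw [ha2, hv, sub_zero]
      have hmod := (ZMod.intCast_eq_intCast_iff _ _ _).mp hz
      have hdvd : (3:ℤ)^h ∣ (0 + ∑ i ∈ range h, a i * 3^i - ∑ i ∈ range h, (3:ℤ)^i) := by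
        have := Int.ModEq.dvd hmod
        push_cast at this
        have h2 : (0 + ∑ i ∈ range h, a i * 3^i - ∑ i ∈ range h, (3:ℤ)^i)
            = -((∑ i ∈ range h, (3:ℤ)^i) - ∑ i ∈ range h, a i * 3^i) := by ring
        rw [h2]
        exact dvd_neg.mpr this
      have hk := MC_key_lower h a 0 hdvd
      rw [abs_zero, zero_add] at hk
      have : (h:ℤ) ≤ (w.length : ℤ) := le_trans hk ha1
      exact_mod_cast this
    have hle : (h : ℕ∞) ≤ (MCGraph 3 h).edist 0 v := by
      rcases eq_or_ne ((MCGraph 3 h).edist 0 v) ⊤ with ht | ht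
      · rw [ht]; exact le_top
      · obtain ⟨p, hp⟩ := exists_walk_of_edist_ne_top ht
        rw [← hp]
        exact_mod_cast hlow p
    exact le_trans hle edist_le_ediam

lemma MC3_diam (h : ℕ) : (MCGraph 3 h).diam = h := by
  rw [SimpleGraph.diam, MC3_ediam]
  simp

/-- Recursion for the diameter of `MC(3^h)`: `diam(MC(3^h)) = diam(MC(3^(h-1))) + 1`. -/
theorem MC_three_diam_recursion (h : ℕ) (hh : 2 ≤ h) :
    (MCGraph 3 h).diam = (MCGraph 3 (h - 1)).diam + 1 := by
  rw [MC3_diam, MC3_diam]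
  omega
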